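/- arXiv:2603.23316 — 7 statements merged into one kernel-verified Lean document; each statement's English description precedes it below -/
import Mathlib

section
/- Let A and B be two distinct nonempty subsets of ℕ. Then the observable distance between the singleton geometric data sets ∗_A and ∗_B equals 1: d_conc(∗_A, ∗_B) = 1. Consequently the family {∗_A : A ⊆ ℕ nonempty} is an uncountable subset of the space of geometric data sets any two distinct members of which are at d_conc-distance 1, so the space of (isomorphism classes of) geometric data sets with the observable distance is not separable. -/
open MeasureTheory Topology Filter ENNReal

noncomputable section

/-- The Ky Fan (extended) pseudometric between two maps, w.r.t. a measure `π`:
`inf {ε ≥ 0 | π {ω | d (u ω) (v ω) > ε} ≤ ε}`. -/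
def kyFan {Ω E : Type*} [MeasurableSpace Ω] [PseudoEMetricSpace E]
    (π : Measure Ω) (u v : Ω → E) : ℝ≥0∞ :=
  sInf {ε : ℝ≥0∞ | π {ω | ε < edist (u ω) (v ω)} ≤ ε}

/-- Hausdorff distance between two sets w.r.t. an abstract extended pseudometric `d`. -/
def hausd {α : Type*} (d : α → α → ℝ≥0∞) (A B : Set α) : ℝ≥0∞ :=
  max (⨆ a : A, ⨅ b : B, d a b) (⨆ b : B, ⨅ a : A, d a b)

/-- The sup (extended) pseudometric `d∞^A` over a subset `A`. -/
def dInfty {α β : Type*} [PseudoEMetricSpace β] (A : Set α) (u v : α → β) : ℝ≥0∞ :=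
  ⨆ a : A, edist (u a) (v a)

/-- A geometric data set: a complete separable metric space whose distance is the
supremum of feature differences over a nonempty family `F` of real-valued functions,
equipped with a fully supported Borel probability measure. -/
structure GDS where
  carrier : Type
  met : MetricSpace carrier
  cms : CompleteSpace carrier
  sep : TopologicalSpace.SeparableSpace carrier
  msp : MeasurableSpace carrier
  bor : BorelSpace carrier
  F : Set (carrier → ℝ)
  F_nonempty : F.Nonempty
  dist_isLUB : ∀ x y : carrier, IsLUB ((fun f => |f x - f y|) '' F) (dist x y)
  μ : Measure carrier
  prob : IsProbabilityMeasure μ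
  full_support : ∀ U : Set carrier, IsOpen U → U.Nonempty → 0 < μ U

attribute [instance] GDS.met GDS.cms GDS.sep GDS.msp GDS.bor GDS.prob

/-- A coupling of the measures of two geometric data sets. -/
def GDS.Coupling (X Y : GDS) (π : Measure (X.carrier × Y.carrier)) : Prop :=
  IsProbabilityMeasure π ∧ π.map Prod.fst = X.μ ∧ π.map Prod.snd = Y.μ

/-- A parameter of a measure `μ`: a Borel measurable map from `[0,1]` (with Lebesgue
measure) pushing the Lebesgue measure forward to `μ`. -/
def IsParam {X : Type*} [MeasurableSpace X] (μ : Measure X)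
    (φ : Set.Icc (0:ℝ) 1 → X) : Prop :=
  Measurable φ ∧ Measure.map φ volume = μ

/-- The observable distance between two geometric data sets. -/
def dConc (X Y : GDS) : ℝ≥0∞ :=
  ⨅ (φ : Set.Icc (0:ℝ) 1 → X.carrier) (_ : IsParam X.μ φ)
    (ψ : Set.Icc (0:ℝ) 1 → Y.carrier) (_ : IsParam Y.μ ψ),
    hausd (kyFan (volume : Measure (Set.Icc (0:ℝ) 1)))
      ((· ∘ φ) '' X.F) ((· ∘ ψ) '' Y.F)

/-- `d_conc^π`, the Hausdorff distance w.r.t. the Ky Fan metric of a coupling `π`. -/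
def dConcCoupling (X Y : GDS) (π : Measure (X.carrier × Y.carrier)) : ℝ≥0∞ :=
  hausd (kyFan π) ((· ∘ Prod.fst) '' X.F) ((· ∘ Prod.snd) '' Y.F)

/-- The Prohorov distance between two Borel measures. -/
def prohorov {Z : Type*} [PseudoEMetricSpace Z] [MeasurableSpace Z]
    (μ ν : Measure Z) : ℝ≥0∞ :=
  sInf {ε : ℝ≥0∞ | ∀ A : Set Z, MeasurableSet A →
    ν A ≤ μ {z | EMetric.infEdist z A < ε} + ε}

/-- The `a`-partial diameter of a Borel measure on `ℝ`. -/
def partialDiam (ν : Measure ℝ) (a : ℝ≥0∞) : ℝ≥0∞ :=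
  ⨅ (I : Set ℝ) (_ : MeasurableSet I) (_ : a ≤ ν I), EMetric.diam I

/-- The `κ`-observable diameter `ObsDiam(X; -κ)` of a geometric data set. -/
def obsDiam (X : GDS) (κ : ℝ) : ℝ≥0∞ :=
  ⨆ f : X.F, partialDiam (X.μ.map f) (ENNReal.ofReal (1 - κ))

/-- The distortion of a subset `S ⊆ X × Y`. -/
def distortion {X Y : Type*} [PseudoMetricSpace X] [PseudoMetricSpace Y]
    (S : Set (X × Y)) : ℝ≥0∞ :=
  ⨆ (p : S) (q : S), edist (dist p.1.1 q.1.1) (dist p.1.2 q.1.2)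

/-- `□_π^S(F, G) = max {1 - π S, 2 H_{d∞^S}(F ∘ pr₁, G ∘ pr₂)}`. -/
def boxS (X Y : GDS) (π : Measure (X.carrier × Y.carrier))
    (S : Set (X.carrier × Y.carrier))
    (F : Set (X.carrier → ℝ)) (G : Set (Y.carrier → ℝ)) : ℝ≥0∞ :=
  max (1 - π S) (2 * hausd (dInfty S) ((· ∘ Prod.fst) '' F) ((· ∘ Prod.snd) '' G))

/-- `□_π(F, G)`, infimum of `□_π^S(F, G)` over closed `S`. -/
def boxCoupling (X Y : GDS) (π : Measure (X.carrier × Y.carrier))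
    (F : Set (X.carrier → ℝ)) (G : Set (Y.carrier → ℝ)) : ℝ≥0∞ :=
  ⨅ (S : Set (X.carrier × Y.carrier)) (_ : IsClosed S), boxS X Y π S F G

/-- The box distance between two geometric data sets. -/
def boxDist (X Y : GDS) : ℝ≥0∞ :=
  ⨅ (π : Measure (X.carrier × Y.carrier)) (_ : X.Coupling Y π),
    boxCoupling X Y π X.F Y.F

/-- The distortion `dis π` of a coupling `π`. -/
def disCoupling (X Y : GDS) (π : Measure (X.carrier × Y.carrier)) : ℝ≥0∞ :=
  ⨅ (S : Set (X.carrier × Y.carrier)) (_ : IsClosed S), max (1 - π S) (distortion S)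

/-- `X ⪯ Y` : the geometric data set `Y` dominates `X` (feature order). -/
def GDS.Dominates (Y X : GDS) : Prop :=
  ∃ p : Y.carrier → X.carrier, Measurable p ∧ Y.μ.map p = X.μ ∧
    (· ∘ p) '' X.F ⊆ closure Y.F

/-- The singleton geometric data set `∗_A` associated with a nonempty set `A ⊆ ℝ`. -/
def singletonGDS (A : Set ℝ) (hA : A.Nonempty) : GDS where
  carrier := Unit
  met := inferInstance
  cms := inferInstance
  sep := inferInstance
  msp := inferInstance
  bor := inferInstance
  F := (fun a => fun _ => a) '' A
  F_nonempty := hA.image _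
  dist_isLUB := by
    intro x y
    have h1 : (fun f : Unit → ℝ => |f x - f y|) '' ((fun a => fun _ => a) '' A) = {0} := by
      ext t
      simp only [Set.mem_image, Set.mem_singleton_iff]
      constructor
      · rintro ⟨f, ⟨a, _, rfl⟩, rfl⟩
        simp
      · rintro rfl
        exact ⟨fun _ => hA.choose, ⟨hA.choose, hA.choose_spec, rfl⟩, by simp⟩
    have h2 : dist x y = 0 := by simp [Subsingleton.elim x y]
    rw [h1, h2]
    exact isLUB_singleton
  μ := Measure.dirac ()
  prob := inferInstance
  full_support := by
    intro U _ hne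
    obtain ⟨u, hu⟩ := hne
    have hmem : (() : Unit) ∈ U := by cases u; exact hu
    have : Measure.dirac () U = 1 := Measure.dirac_apply_of_mem hmem
    rw [this]
    exact zero_lt_one

/-!
For a one-point data set every parameter is constant, so the features of `∗_A`, read through
any parameter, are the constant functions with values in `A`. Constants at distance `≥ 1` are at
Ky Fan distance exactly `1` under a probability measure, which is also the largest possible Ky Fan
distance; hence `d_conc(∗_A, ∗_B) = 1` as soon as some `n ∈ A` is missing from `B` (or vice versa).

For non-separability, suppose `d_conc(∗_A, Y) < 1/2` and `d_conc(∗_B, Y) < 1/2`. Pushing the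
parameters of `Y` forward, both estimates become Ky Fan estimates for the measure of `Y` itself,
so every `n ∈ A` is `1/2`-close to a feature `g` of `Y`, which is `1/2`-close to some `b ∈ B`; by
the triangle inequality `n = b`. Thus `A ⊆ B`, and by symmetry `A = B`: a `1/2`-dense set would
contain distinct points for the uncountably many nonempty `A ⊆ ℕ`.
-/

section KyFan

variable {Ω E : Type*} [MeasurableSpace Ω] [PseudoEMetricSpace E]

theorem kyFan_comm (π : Measure Ω) (u v : Ω → E) : kyFan π u v = kyFan π v u := by
  simp only [kyFan, edist_comm]

theorem kyFan_le_one (π : Measure Ω) [IsProbabilityMeasure π] (u v : Ω → E) :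
    kyFan π u v ≤ 1 :=
  sInf_le (prob_le_one : π _ ≤ 1)

theorem kyFan_const_eq_one (π : Measure Ω) [IsProbabilityMeasure π] {a b : E}
    (hab : 1 ≤ edist a b) : kyFan π (fun _ => a) (fun _ => b) = 1 := by
  refine le_antisymm (kyFan_le_one π _ _) (le_sInf fun ε hε => ?_)
  by_contra! hε1
  have hall : {ω : Ω | ε < edist a b} = Set.univ := Set.eq_univ_of_forall fun _ => hε1.trans_le hab
  have hμ : π {ω : Ω | ε < edist a b} ≤ ε := hε
  rw [hall, measure_univ] at hμ
  exact hμ.not_gt hε1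

theorem kyFan_triangle (π : Measure Ω) (u v w : Ω → E) :
    kyFan π u w ≤ kyFan π u v + kyFan π v w := by
  simp only [kyFan]
  rw [ENNReal.sInf_add]
  refine le_iInf₂ fun ε hε => ?_
  rw [ENNReal.add_sInf]
  refine le_iInf₂ fun δ hδ => sInf_le ?_
  have hsub : {ω | ε + δ < edist (u ω) (w ω)} ⊆
      {ω | ε < edist (u ω) (v ω)} ∪ {ω | δ < edist (v ω) (w ω)} := by
    intro ω hω
    by_contra h
    rw [Set.mem_union, not_or] at h
    exact hω.not_ge ((edist_triangle _ _ _).trans (add_le_add (not_lt.mp h.1) (not_lt.mp h.2)))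
  calc π {ω | ε + δ < edist (u ω) (w ω)}
      ≤ π {ω | ε < edist (u ω) (v ω)} + π {ω | δ < edist (v ω) (w ω)} :=
        (measure_mono hsub).trans (measure_union_le _ _)
    _ ≤ ε + δ := add_le_add hε hδ

theorem kyFan_comp {Ω' : Type*} [MeasurableSpace Ω'] (π : Measure Ω) {ψ : Ω → Ω'}
    (hψ : Measurable ψ) {u v : Ω' → E} (huv : Measurable fun x => edist (u x) (v x)) :
    kyFan π (u ∘ ψ) (v ∘ ψ) = kyFan (π.map ψ) u v := by
  simp only [kyFan]
  congr! 3 with ε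
  rw [Measure.map_apply hψ (measurableSet_lt measurable_const huv)]
  rfl

end KyFan

section Hausdorff

variable {α : Type*} {d : α → α → ℝ≥0∞} {P Q : Set α} {c : ℝ≥0∞}

theorem hausd_le_of_forall_le (hP : P.Nonempty) (hQ : Q.Nonempty) (h : ∀ p q, d p q ≤ c) :
    hausd d P Q ≤ c :=
  max_le (iSup_le fun _ => (iInf_le _ ⟨_, hQ.some_mem⟩).trans (h _ _))
    (iSup_le fun _ => (iInf_le _ ⟨_, hP.some_mem⟩).trans (h _ _))

theorem le_hausd_of_mem_left {p : α} (hp : p ∈ P) (h : ∀ q ∈ Q, c ≤ d p q) :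
    c ≤ hausd d P Q :=
  (le_iInf fun q : Q => h q q.2).trans ((le_iSup (fun p : P => ⨅ q : Q, d p q) ⟨p, hp⟩).trans
    (le_max_left _ _))

theorem le_hausd_of_mem_right {q : α} (hq : q ∈ Q) (h : ∀ p ∈ P, c ≤ d p q) :
    c ≤ hausd d P Q :=
  (le_iInf fun p : P => h p p.2).trans ((le_iSup (fun q : Q => ⨅ p : P, d p q) ⟨q, hq⟩).trans
    (le_max_right _ _))

theorem exists_lt_of_hausd_lt_left (h : hausd d P Q < c) {p : α} (hp : p ∈ P) :
    ∃ q ∈ Q, d p q < c := by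
  obtain ⟨q, hq⟩ := iInf_lt_iff.mp ((le_iSup (fun p : P => ⨅ q : Q, d p q) ⟨p, hp⟩).trans_lt
    ((le_max_left _ _).trans_lt h))
  exact ⟨q, q.2, hq⟩

theorem exists_lt_of_hausd_lt_right (h : hausd d P Q < c) {q : α} (hq : q ∈ Q) :
    ∃ p ∈ P, d p q < c := by
  obtain ⟨p, hp⟩ := iInf_lt_iff.mp ((le_iSup (fun q : Q => ⨅ p : P, d p q) ⟨q, hq⟩).trans_lt
    ((le_max_right _ _).trans_lt h))
  exact ⟨p, p.2, hp⟩

end Hausdorff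

theorem hausd_kyFan_const_eq_one {Ω E : Type*} [MeasurableSpace Ω] [PseudoEMetricSpace E]
    (π : Measure Ω) [IsProbabilityMeasure π] {A B : Set E} (hA : A.Nonempty) (hB : B.Nonempty)
    (hsep : (A ∪ B).Pairwise (1 ≤ edist · ·)) (hAB : A ≠ B) :
    hausd (kyFan π) ((fun a _ => a) '' A) ((fun b _ => b) '' B) = 1 := by
  refine le_antisymm (hausd_le_of_forall_le (hA.image _) (hB.image _) (kyFan_le_one π)) ?_
  obtain ⟨n, ⟨hnA, hnB⟩ | ⟨hnB, hnA⟩⟩ := Set.symmDiff_nonempty.mpr hAB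
  · refine le_hausd_of_mem_left (Set.mem_image_of_mem _ hnA) ?_
    rintro _ ⟨m, hmB, rfl⟩
    exact (kyFan_const_eq_one π
      (hsep (.inl hnA) (.inr hmB) (ne_of_mem_of_not_mem hmB hnB).symm)).ge
  · refine le_hausd_of_mem_right (Set.mem_image_of_mem _ hnB) ?_
    rintro _ ⟨m, hmA, rfl⟩
    exact (kyFan_const_eq_one π
      (hsep (.inl hmA) (.inr hnB) (ne_of_mem_of_not_mem hmA hnA))).ge

theorem GDS.lipschitzWith_of_mem_F (Y : GDS) {f : Y.carrier → ℝ} (hf : f ∈ Y.F) :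
    LipschitzWith 1 f :=
  LipschitzWith.of_dist_le_mul fun x y => by
    rw [Real.dist_eq, NNReal.coe_one, one_mul]
    exact (Y.dist_isLUB x y).1 ⟨f, hf, rfl⟩

theorem GDS.kyFan_comp_of_isParam (Y : GDS) {ψ : Set.Icc (0:ℝ) 1 → Y.carrier}
    (hψ : IsParam Y.μ ψ) (a : ℝ) {g : Y.carrier → ℝ} (hg : g ∈ Y.F) :
    kyFan volume (fun _ => a) (g ∘ ψ) = kyFan Y.μ (fun _ => a) g := by
  rw [← hψ.2, ← kyFan_comp volume hψ.1
    (continuous_const.edist (Y.lipschitzWith_of_mem_F hg).continuous).measurable]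
  rfl

section Singleton

variable (A : Set ℝ) (hA : A.Nonempty)

theorem singletonGDS_F_comp {Ω : Type*} (φ : Ω → (singletonGDS A hA).carrier) :
    (· ∘ φ) '' (singletonGDS A hA).F = (fun a (_ : Ω) => a) '' A :=
  Set.image_image _ _ _

theorem isParam_singletonGDS : IsParam (singletonGDS A hA).μ (fun _ => ()) := by
  refine ⟨measurable_const, ?_⟩
  change Measure.map (fun _ => ()) volume = Measure.dirac ()
  rw [Measure.map_const, measure_univ, one_smul]

theorem dConc_singletonGDS_left (Y : GDS) :
    dConc (singletonGDS A hA) Y =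
      ⨅ (ψ : Set.Icc (0:ℝ) 1 → Y.carrier) (_ : IsParam Y.μ ψ),
        hausd (kyFan (volume : Measure (Set.Icc (0:ℝ) 1)))
          ((fun a _ => a) '' A) ((· ∘ ψ) '' Y.F) := by
  simp only [dConc, singletonGDS_F_comp]
  exact biInf_const ⟨_, isParam_singletonGDS A hA⟩

theorem dConc_singletonGDS_singletonGDS (B : Set ℝ) (hB : B.Nonempty) :
    dConc (singletonGDS A hA) (singletonGDS B hB) =
      hausd (kyFan (volume : Measure (Set.Icc (0:ℝ) 1)))
        ((fun a _ => a) '' A) ((fun b _ => b) '' B) := by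
  simp only [dConc_singletonGDS_left, singletonGDS_F_comp]
  exact biInf_const ⟨_, isParam_singletonGDS B hB⟩

theorem exists_kyFan_lt_of_dConc_singletonGDS_lt {Y : GDS} {c : ℝ≥0∞}
    (h : dConc (singletonGDS A hA) Y < c) :
    (∀ a ∈ A, ∃ g ∈ Y.F, kyFan Y.μ (fun _ => a) g < c) ∧
      ∀ g ∈ Y.F, ∃ a ∈ A, kyFan Y.μ (fun _ => a) g < c := by
  rw [dConc_singletonGDS_left] at h
  obtain ⟨ψ, hψ, h⟩ : ∃ ψ, ∃ _ : IsParam Y.μ ψ, _ := by simpa only [iInf_lt_iff] using h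
  refine ⟨fun a ha => ?_, fun g hg => ?_⟩
  · obtain ⟨_, ⟨g, hg, rfl⟩, hlt⟩ := exists_lt_of_hausd_lt_left h (Set.mem_image_of_mem _ ha)
    exact ⟨g, hg, Y.kyFan_comp_of_isParam hψ a hg ▸ hlt⟩
  · obtain ⟨_, ⟨a, ha, rfl⟩, hlt⟩ := exists_lt_of_hausd_lt_right h (Set.mem_image_of_mem _ hg)
    exact ⟨a, ha, Y.kyFan_comp_of_isParam hψ a hg ▸ hlt⟩

theorem subset_of_dConc_singletonGDS_lt_half (B : Set ℝ) (hB : B.Nonempty)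
    (hsep : (A ∪ B).Pairwise (1 ≤ edist · ·)) {Y : GDS}
    (hAY : dConc (singletonGDS A hA) Y < 1 / 2) (hBY : dConc (singletonGDS B hB) Y < 1 / 2) :
    A ⊆ B := by
  intro a ha
  obtain ⟨g, hg, hag⟩ := (exists_kyFan_lt_of_dConc_singletonGDS_lt A hA hAY).1 a ha
  obtain ⟨b, hb, hbg⟩ := (exists_kyFan_lt_of_dConc_singletonGDS_lt B hB hBY).2 g hg
  have hab : kyFan Y.μ (fun _ => a) (fun _ => b) < 1 :=
    calc kyFan Y.μ (fun _ => a) (fun _ => b)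
        ≤ kyFan Y.μ (fun _ => a) g + kyFan Y.μ (fun _ => b) g :=
          kyFan_comm Y.μ (fun _ => b) g ▸ kyFan_triangle Y.μ _ g _
      _ < 1 / 2 + 1 / 2 := ENNReal.add_lt_add hag hbg
      _ = 1 := ENNReal.add_halves 1
  by_contra haB
  exact hab.ne (kyFan_const_eq_one Y.μ
    (hsep (.inl ha) (.inr hb) (ne_of_mem_of_not_mem hb haB).symm))

end Singleton

theorem pairwise_one_le_edist_natCast :
    (Set.range ((↑) : ℕ → ℝ)).Pairwise (1 ≤ edist · ·) := by
  rintro _ ⟨m, rfl⟩ _ ⟨n, rfl⟩ hmn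
  rw [edist_dist, Nat.dist_cast_real, ENNReal.one_le_ofReal]
  exact Nat.pairwise_one_le_dist fun h => hmn (congrArg _ h)

theorem not_countable_nonempty_set_nat : ¬ Countable {S : Set ℕ // S.Nonempty} := by
  intro h
  have hcomp : (Set.univ \ {S : Set ℕ | S.Nonempty}).Countable :=
    (Set.countable_singleton ∅).mono fun S hS => Set.not_nonempty_iff_eq_empty.mp hS.2
  have : Countable (Set ℕ) :=
    Set.countable_univ_iff.mp (hcomp.of_sdiff (Set.countable_coe_iff.mp h))
  obtain ⟨f, hf⟩ := Countable.exists_injective_nat (Set ℕ)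
  exact Function.cantor_injective f hf

/-- For distinct nonempty `A, B ⊆ ℕ`, the observable distance between the
singleton geometric data sets `∗_A` and `∗_B` equals `1`; consequently the space of
geometric data sets with the observable distance is not separable. -/
theorem dConc_singleton_eq_one_and_not_separable
    (A B : Set ℕ) (hA : A.Nonempty) (hB : B.Nonempty) (hAB : A ≠ B) :
    dConc (singletonGDS ((Nat.cast : ℕ → ℝ) '' A) (hA.image _))
        (singletonGDS ((Nat.cast : ℕ → ℝ) '' B) (hB.image _)) = 1 ∧
    ¬ ∃ D : Set GDS, D.Countable ∧
        ∀ X : GDS, ∀ ε : ℝ≥0∞, 0 < ε → ∃ Y ∈ D, dConc X Y < ε := by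
  have hsep (S T : Set ℕ) : ((Nat.cast : ℕ → ℝ) '' S ∪ (Nat.cast : ℕ → ℝ) '' T).Pairwise
      (1 ≤ edist · ·) :=
    pairwise_one_le_edist_natCast.mono
      (Set.union_subset (Set.image_subset_range _ _) (Set.image_subset_range _ _))
  have hcast : Function.Injective (Set.image ((↑) : ℕ → ℝ)) :=
    Set.image_injective.mpr Nat.cast_injective
  refine ⟨?_, fun ⟨D, hD, hdense⟩ => ?_⟩
  · rw [dConc_singletonGDS_singletonGDS]
    exact hausd_kyFan_const_eq_one volume (hA.image _) (hB.image _) (hsep A B) (hcast.ne hAB)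
  · choose Y hYD hY using fun S : {S : Set ℕ // S.Nonempty} =>
      hdense (singletonGDS _ (S.2.image ((↑) : ℕ → ℝ))) (1 / 2) (by norm_num)
    have hY_inj : Function.Injective Y := fun S T hST => Subtype.ext <| hcast <|
      (subset_of_dConc_singletonGDS_lt_half _ _ _ _ (hsep S T) (hY S) (hST ▸ hY T)).antisymm
        (subset_of_dConc_singletonGDS_lt_half _ _ _ _ (hsep T S) (hST ▸ hY T) (hY S))
    have : Countable D := hD.to_subtype
    exact not_countable_nonempty_set_nat
      (Function.Injective.countable (f := fun S => (⟨Y S, hYD S⟩ : D))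
        fun S T hST => hY_inj (congrArg Subtype.val hST))
end
end

section
/- Let X and Y be complete separable metric spaces and let S be a nonempty closed subset of X × Y (with the l∞-product metric). Then dis S = 2 · H_{d∞^S}(Lip₁(X) ∘ pr₁, Lip₁(Y) ∘ pr₂), where the left-hand side is the distortion of S and the right-hand side is twice the Hausdorff distance, with respect to the sup pseudometric d∞^S over S, between the family of compositions of 1-Lipschitz real-valued functions on X with the first projection and the family of compositions of 1-Lipschitz real-valued functions on Y with the second projection. -/
open MeasureTheory Topology Filter ENNReal

noncomputable section

/-! Given `p, q ∈ S`, the 1-Lipschitz function `dist p.1` on `X` can only be matched on `S` by a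
1-Lipschitz `g` on `Y` within `t` if `dist p.1 q.1 ≤ dist p.2 q.2 + 2t`; this gives `dis S ≤ 2H`.
Conversely, if `dist p.1 q.1 ≤ dist p.2 q.2 + D` on `S`, the inf-convolution
`y ↦ ⨅ q ∈ S, f q.1 + dist y q.2 + D / 2` is 1-Lipschitz and matches `f` on `S` within `D / 2`,
so `2H ≤ dis S`. -/

open Set

lemma LipschitzWith.le_add_dist {α : Type*} [PseudoMetricSpace α] {f : α → ℝ}
    (hf : LipschitzWith 1 f) (x y : α) : f x ≤ f y + dist x y := by
  simpa using hf.le_add_mul x y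

lemma hausd_image_image {α β γ : Type*} (d : α → α → ℝ≥0∞) (φ : β → α) (ψ : γ → α)
    (s : Set β) (t : Set γ) :
    hausd d (φ '' s) (ψ '' t) =
      max (⨆ x ∈ s, ⨅ y ∈ t, d (φ x) (ψ y)) (⨆ y ∈ t, ⨅ x ∈ s, d (φ x) (ψ y)) := by
  simp only [hausd, iSup_subtype, iInf_subtype, iSup_image, iInf_image]

section dInfty

variable {α : Type*} {A : Set α} {u v : α → ℝ}

lemma dInfty_le_ofReal {t : ℝ} (h : ∀ a ∈ A, |u a - v a| ≤ t) :
    dInfty A u v ≤ ENNReal.ofReal t :=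
  iSup_le fun a => by
    rw [edist_dist, Real.dist_eq]
    exact ENNReal.ofReal_le_ofReal (h a a.2)

lemma abs_sub_lt_of_dInfty_lt {t : ℝ} (h : dInfty A u v < ENNReal.ofReal t) {a : α}
    (ha : a ∈ A) : |u a - v a| < t := by
  have hle : edist (u a) (v a) ≤ dInfty A u v := le_iSup (fun b : A => edist (u b) (v b)) ⟨a, ha⟩
  rw [edist_dist, Real.dist_eq] at hle
  exact (ENNReal.ofReal_lt_ofReal_iff'.1 (hle.trans_lt h)).1

end dInfty

lemma dInfty_preimage_swap_comp {X Y : Type*} (S : Set (X × Y)) (f : X → ℝ) (g : Y → ℝ) :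
    dInfty (Prod.swap ⁻¹' S) (g ∘ Prod.fst) (f ∘ Prod.snd) =
      dInfty S (f ∘ Prod.fst) (g ∘ Prod.snd) := by
  refine le_antisymm (iSup_le fun p => ?_) (iSup_le fun p => ?_)
  · rw [edist_comm]
    exact le_iSup (fun q : S => edist (f q.1.1) (g q.1.2)) ⟨p.1.swap, p.2⟩
  · rw [edist_comm]
    exact le_iSup (fun q : Prod.swap ⁻¹' S => edist (g q.1.1) (f q.1.2))
      ⟨p.1.swap, by simp [p.2]⟩

section Distortion

variable {X Y : Type*} [PseudoMetricSpace X] [PseudoMetricSpace Y] {S : Set (X × Y)}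

lemma abs_dist_sub_dist_le_toReal_distortion (hfin : distortion S ≠ ⊤) {p q : X × Y}
    (hp : p ∈ S) (hq : q ∈ S) : |dist p.1 q.1 - dist p.2 q.2| ≤ (distortion S).toReal := by
  have hle : edist (dist p.1 q.1) (dist p.2 q.2) ≤ distortion S :=
    le_iSup₂ (f := fun (p q : S) => edist (dist p.1.1 q.1.1) (dist p.1.2 q.1.2)) ⟨p, hp⟩ ⟨q, hq⟩
  rw [edist_dist, Real.dist_eq] at hle
  exact (ENNReal.ofReal_le_iff_le_toReal hfin).1 hle

lemma distortion_le_ofReal {D : ℝ} (h : ∀ p ∈ S, ∀ q ∈ S, |dist p.1 q.1 - dist p.2 q.2| ≤ D) :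
    distortion S ≤ ENNReal.ofReal D :=
  iSup₂_le fun p q => by
    rw [edist_dist, Real.dist_eq]
    exact ENNReal.ofReal_le_ofReal (h p p.2 q q.2)

lemma distortion_le_two_mul_of_forall_lt {c : ℝ≥0∞}
    (h : ∀ t : ℝ, c < ENNReal.ofReal t →
      ∀ p ∈ S, ∀ q ∈ S, |dist p.1 q.1 - dist p.2 q.2| ≤ 2 * t) :
    distortion S ≤ 2 * c := by
  refine ENNReal.le_of_forall_pos_le_add fun ε hε h2c => ?_
  have hc : c ≠ ⊤ := ne_top_of_lt (lt_of_le_of_lt (le_mul_of_one_le_left' one_le_two) h2c)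
  have hct : c < ENNReal.ofReal (c.toReal + ε / 2) := by
    rw [ENNReal.ofReal_add ENNReal.toReal_nonneg (by positivity), ENNReal.ofReal_toReal hc]
    exact ENNReal.lt_add_right hc (by simpa using hε)
  calc distortion S ≤ ENNReal.ofReal (2 * (c.toReal + ε / 2)) := distortion_le_ofReal (h _ hct)
    _ = 2 * c + ε := by
      rw [mul_add, mul_div_cancel₀ _ two_ne_zero, ENNReal.ofReal_add (by positivity) ε.coe_nonneg,
        ENNReal.ofReal_mul zero_le_two, ENNReal.ofReal_toReal hc, ENNReal.ofReal_coe_nnreal]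
      norm_num

lemma distortion_preimage_swap : distortion (Prod.swap ⁻¹' S) = distortion S := by
  refine le_antisymm (iSup₂_le fun p q => ?_) (iSup₂_le fun p q => ?_)
  · rw [edist_comm]
    exact le_iSup₂ (f := fun (p q : S) => edist (dist p.1.1 q.1.1) (dist p.1.2 q.1.2))
      ⟨p.1.swap, p.2⟩ ⟨q.1.swap, q.2⟩
  · rw [edist_comm]
    exact le_iSup₂ (f := fun (p q : Prod.swap ⁻¹' S) => edist (dist p.1.1 q.1.1) (dist p.1.2 q.1.2))
      ⟨p.1.swap, by simp [p.2]⟩ ⟨q.1.swap, by simp [q.2]⟩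

lemma exists_lipschitzWith_abs_sub_le {D : ℝ}
    (hdis : ∀ p ∈ S, ∀ q ∈ S, dist p.1 q.1 ≤ dist p.2 q.2 + D) {f : X → ℝ}
    (hf : LipschitzWith 1 f) :
    ∃ g : Y → ℝ, LipschitzWith 1 g ∧ ∀ p ∈ S, |f p.1 - g p.2| ≤ D / 2 := by
  rcases S.eq_empty_or_nonempty with rfl | ⟨p₀, hp₀⟩
  · exact ⟨fun _ => 0, LipschitzWith.const' 0, by simp⟩
  have : Nonempty S := ⟨⟨p₀, hp₀⟩⟩
  set g : Y → ℝ := fun y => ⨅ q : S, f q.1.1 + dist y q.1.2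
  have hbdd (y : Y) : BddBelow (range fun q : S => f q.1.1 + dist y q.1.2) := by
    refine ⟨f p₀.1 - D - dist y p₀.2, ?_⟩
    rintro _ ⟨q, rfl⟩
    linarith [hf.le_add_dist p₀.1 q.1.1, hdis p₀ hp₀ q q.2, dist_triangle_left p₀.2 q.1.2 y]
  have hg : LipschitzWith 1 g := LipschitzWith.of_le_add fun y y' => by
    rw [← sub_le_iff_le_add]
    refine le_ciInf fun q => ?_
    linarith [ciInf_le (hbdd y) q, dist_triangle y y' q.1.2]
  have hg_le {p : X × Y} (hp : p ∈ S) : g p.2 ≤ f p.1 := by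
    simpa using ciInf_le (hbdd p.2) ⟨p, hp⟩
  have le_hg {p : X × Y} (hp : p ∈ S) : f p.1 - D ≤ g p.2 :=
    le_ciInf fun q => by linarith [hf.le_add_dist p.1 q.1.1, hdis p hp q q.2]
  refine ⟨fun y => g y + D / 2, LipschitzWith.of_le_add fun y y' => by
    linarith [hg.le_add_dist y y'], fun p hp => abs_sub_le_iff.2 ⟨?_, ?_⟩⟩ <;>
    linarith [hg_le hp, le_hg hp]

/-- The one-sided Hausdorff excess of `Lip₁(X) ∘ pr₁` over `Lip₁(Y) ∘ pr₂` in `d∞^S`. -/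
def lipschitzExcess (S : Set (X × Y)) : ℝ≥0∞ :=
  ⨆ (f : X → ℝ) (_ : LipschitzWith 1 f), ⨅ (g : Y → ℝ) (_ : LipschitzWith 1 g),
    dInfty S (f ∘ Prod.fst) (g ∘ Prod.snd)

lemma two_mul_lipschitzExcess_le_distortion : 2 * lipschitzExcess S ≤ distortion S := by
  by_cases htop : distortion S = ⊤
  · simp [htop]
  set D := (distortion S).toReal
  have hdis : ∀ p ∈ S, ∀ q ∈ S, dist p.1 q.1 ≤ dist p.2 q.2 + D := fun p hp q hq => by
    linarith [le_abs_self (dist p.1 q.1 - dist p.2 q.2),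
      abs_dist_sub_dist_le_toReal_distortion htop hp hq]
  have hexcess : lipschitzExcess S ≤ ENNReal.ofReal (D / 2) := iSup₂_le fun f hf => by
    obtain ⟨g, hg, hfg⟩ := exists_lipschitzWith_abs_sub_le hdis hf
    exact iInf₂_le_of_le g hg (dInfty_le_ofReal hfg)
  calc 2 * lipschitzExcess S ≤ 2 * ENNReal.ofReal (D / 2) := by gcongr
    _ = distortion S := by
      rw [← ENNReal.ofReal_ofNat 2, ← ENNReal.ofReal_mul zero_le_two, mul_div_cancel₀ _ two_ne_zero,
        ENNReal.ofReal_toReal htop]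

lemma dist_le_dist_add_of_lipschitzExcess_lt {t : ℝ} (ht : lipschitzExcess S < ENNReal.ofReal t)
    {p q : X × Y} (hp : p ∈ S) (hq : q ∈ S) : dist p.1 q.1 ≤ dist p.2 q.2 + 2 * t := by
  have hmatch : ⨅ (g : Y → ℝ) (_ : LipschitzWith 1 g),
      dInfty S (dist p.1 ∘ Prod.fst) (g ∘ Prod.snd) < ENNReal.ofReal t :=
    (le_iSup₂ (f := fun (f : X → ℝ) (_ : LipschitzWith 1 f) => ⨅ (g : Y → ℝ)
      (_ : LipschitzWith 1 g), dInfty S (f ∘ Prod.fst) (g ∘ Prod.snd))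
      _ (LipschitzWith.dist_right p.1)).trans_lt ht
  obtain ⟨g, hgt⟩ := iInf_lt_iff.1 hmatch
  obtain ⟨hg, hgt⟩ := iInf_lt_iff.1 hgt
  have hp' := abs_sub_lt_of_dInfty_lt hgt hp
  have hq' := abs_sub_lt_of_dInfty_lt hgt hq
  simp only [Function.comp_apply, dist_self, zero_sub, abs_neg] at hp' hq'
  linarith [hg.le_add_dist q.2 p.2, dist_comm q.2 p.2, abs_lt.1 hp', abs_lt.1 hq']

lemma hausd_dInfty_eq_max_lipschitzExcess (S : Set (X × Y)) :
    hausd (dInfty S) ((· ∘ Prod.fst) '' {f : X → ℝ | LipschitzWith 1 f})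
      ((· ∘ Prod.snd) '' {g : Y → ℝ | LipschitzWith 1 g}) =
    max (lipschitzExcess S) (lipschitzExcess (Prod.swap ⁻¹' S)) := by
  simp only [hausd_image_image, lipschitzExcess, mem_setOf_eq, dInfty_preimage_swap_comp]

end Distortion

theorem distortion_eq_two_hausd_general {X Y : Type*} [MetricSpace X] [MetricSpace Y]
    (S : Set (X × Y)) :
    distortion S = 2 * hausd (dInfty S)
      ((· ∘ Prod.fst) '' {f : X → ℝ | LipschitzWith 1 f})
      ((· ∘ Prod.snd) '' {g : Y → ℝ | LipschitzWith 1 g}) := by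
  rw [hausd_dInfty_eq_max_lipschitzExcess]
  refine le_antisymm (distortion_le_two_mul_of_forall_lt fun t ht p hp q hq => abs_sub_le_iff.2 ⟨?_, ?_⟩) ?_
  · linarith [dist_le_dist_add_of_lipschitzExcess_lt ((le_max_left _ _).trans_lt ht) hp hq]
  · have hswap := dist_le_dist_add_of_lipschitzExcess_lt ((le_max_right _ _).trans_lt ht)
      (p := p.swap) (q := q.swap) (by simpa using hp) (by simpa using hq)
    simp only [Prod.fst_swap, Prod.snd_swap] at hswap
    linarith
  · rw [mul_max]
    refine max_le two_mul_lipschitzExcess_le_distortion ?_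
    rw [← distortion_preimage_swap (S := S)]
    exact two_mul_lipschitzExcess_le_distortion

/-- For a nonempty closed subset `S ⊆ X × Y` of a product of complete
separable metric spaces, `dis S = 2 H_{d∞^S}(Lip₁(X) ∘ pr₁, Lip₁(Y) ∘ pr₂)`. -/
theorem distortion_eq_two_hausd {X Y : Type*} [MetricSpace X] [CompleteSpace X]
    [TopologicalSpace.SeparableSpace X] [MetricSpace Y] [CompleteSpace Y]
    [TopologicalSpace.SeparableSpace Y]
    (S : Set (X × Y)) (hS : IsClosed S) (hne : S.Nonempty) :
    distortion S = 2 * hausd (dInfty S)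
      ((· ∘ Prod.fst) '' {f : X → ℝ | LipschitzWith 1 f})
      ((· ∘ Prod.snd) '' {g : Y → ℝ | LipschitzWith 1 g}) :=
  distortion_eq_two_hausd_general S
end
end

section
/- Let X and Y be geometric data sets and let π, ρ ∈ Π(μ_X, μ_Y) be couplings of μ_X and μ_Y. Then |d_conc^π(X,Y) − d_conc^ρ(X,Y)| ≤ 2 d_P(π, ρ), where d_P is the Prohorov distance between π and ρ on X × Y equipped with the l∞-product metric. -/
open MeasureTheory Topology Filter ENNReal

noncomputable section

/-!
Moving a coupling by Prohorov distance `δ` moves the Ky Fan distance between any two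
`1`-Lipschitz maps by at most `2δ`: the function `z ↦ |f z.1 - g z.2|` is `2`-Lipschitz for the
`l∞` metric on `X × Y`, so the `δ`-neighbourhood of `{|f - g| > ε + 2δ}` lies inside
`{|f - g| > ε}`. Features of a geometric data set are `1`-Lipschitz, and the Hausdorff distance
inherits the pointwise bound. The Prohorov condition is one-sided, but for measures of equal
finite mass it is symmetric (apply it to the complement of a neighbourhood).
-/

open Metric (infEDist)

lemma hausd_le_hausd_add {α : Type*} {d₁ d₂ : α → α → ℝ≥0∞} {c : ℝ≥0∞} {A B : Set α}
    (h : ∀ a ∈ A, ∀ b ∈ B, d₂ a b ≤ d₁ a b + c) :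
    hausd d₂ A B ≤ hausd d₁ A B + c := by
  have one_side : ∀ (e₁ e₂ : α → α → ℝ≥0∞) (S T : Set α),
      (∀ s ∈ S, ∀ t ∈ T, e₂ s t ≤ e₁ s t + c) →
      ⨆ s : S, ⨅ t : T, e₂ s t ≤ (⨆ s : S, ⨅ t : T, e₁ s t) + c := fun e₁ e₂ S T he =>
    iSup_le fun s => calc
      ⨅ t : T, e₂ s t ≤ ⨅ t : T, (e₁ s t + c) := iInf_mono fun t => he s s.2 t t.2
      _ = (⨅ t : T, e₁ s t) + c := ENNReal.iInf_add.symm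
      _ ≤ (⨆ s : S, ⨅ t : T, e₁ s t) + c := by
        gcongr; exact le_iSup (fun s : S => ⨅ t : T, e₁ s t) s
  rw [hausd, hausd, ← max_add_add_right]
  exact max_le_max (one_side d₁ d₂ A B h)
    (one_side (flip d₁) (flip d₂) B A fun b hb a ha => h a ha b hb)

lemma le_add_mul_sInf {a b c : ℝ≥0∞} {s : Set ℝ≥0∞} (hc₀ : c ≠ 0) (hc : c ≠ ∞)
    (h : ∀ δ ∈ s, a ≤ b + c * δ) : a ≤ b + c * sInf s := by
  rw [sInf_eq_iInf', ENNReal.mul_iInf_of_ne hc₀ hc, ENNReal.add_iInf]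
  exact le_iInf fun δ => h δ δ.2

def IsProhorovBound {Z : Type*} [PseudoEMetricSpace Z] [MeasurableSpace Z]
    (μ ν : Measure Z) (δ : ℝ≥0∞) : Prop :=
  ∀ A : Set Z, MeasurableSet A → ν A ≤ μ {z | infEDist z A < δ} + δ

lemma prohorov_eq_sInf_isProhorovBound {Z : Type*} [PseudoEMetricSpace Z] [MeasurableSpace Z]
    (μ ν : Measure Z) : prohorov μ ν = sInf {δ | IsProhorovBound μ ν δ} :=
  rfl

lemma IsProhorovBound.symm {Z : Type*} [PseudoEMetricSpace Z] [MeasurableSpace Z]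
    [OpensMeasurableSpace Z] {μ ν : Measure Z} [IsFiniteMeasure ν] {δ : ℝ≥0∞}
    (hmass : μ Set.univ = ν Set.univ) (h : IsProhorovBound μ ν δ) : IsProhorovBound ν μ δ := by
  intro B hB
  set N := {z | infEDist z B < δ}
  have hN : MeasurableSet N :=
    (isOpen_lt Metric.continuous_infEDist continuous_const).measurableSet
  have nbhd_compl_subset : {z | infEDist z Nᶜ < δ} ⊆ Bᶜ := by
    intro z hz hzB
    obtain ⟨c, hcN, hzc⟩ := Metric.infEDist_lt_iff.mp hz
    exact hcN ((Metric.infEDist_le_edist_of_mem hzB).trans_lt (by rwa [edist_comm]))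
  have hcompl : ν Nᶜ ≤ μ Bᶜ + δ :=
    (h Nᶜ hN.compl).trans (add_le_add_left (measure_mono nbhd_compl_subset) δ)
  refine ENNReal.le_of_add_le_add_right (measure_ne_top ν Nᶜ) ?_
  calc μ B + ν Nᶜ ≤ μ B + (μ Bᶜ + δ) := by gcongr
    _ = ν N + ν Nᶜ + δ := by
      rw [← add_assoc, measure_add_measure_compl hB, measure_add_measure_compl hN, hmass]
    _ = ν N + δ + ν Nᶜ := add_right_comm _ _ _

lemma edist_le_edist_add_two_mul {Ω E : Type*} [PseudoEMetricSpace Ω] [PseudoEMetricSpace E]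
    {u v : Ω → E} (hu : LipschitzWith 1 u) (hv : LipschitzWith 1 v) (z z' : Ω) :
    edist (u z) (v z) ≤ edist (u z') (v z') + 2 * edist z z' := by
  calc edist (u z) (v z) ≤ edist (u z) (u z') + edist (u z') (v z') + edist (v z') (v z) :=
        edist_triangle4 _ _ _ _
    _ ≤ edist z z' + edist (u z') (v z') + edist z' z := by
        gcongr
        · simpa using hu.edist_le_mul z z'
        · simpa using hv.edist_le_mul z' z
    _ = edist (u z') (v z') + 2 * edist z z' := by rw [edist_comm z' z]; ring

lemma kyFan_le_kyFan_add_of_isProhorovBound {Ω E : Type*} [PseudoEMetricSpace Ω]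
    [MeasurableSpace Ω] [OpensMeasurableSpace Ω] [PseudoEMetricSpace E]
    {π ρ : Measure Ω} {δ : ℝ≥0∞} (hδ : IsProhorovBound π ρ δ)
    {u v : Ω → E} (hu : LipschitzWith 1 u) (hv : LipschitzWith 1 v) :
    kyFan ρ u v ≤ kyFan π u v + 2 * δ := by
  rw [kyFan, kyFan, ENNReal.sInf_add]
  refine le_iInf₂ fun ε (hε : π {ω | ε < edist (u ω) (v ω)} ≤ ε) => sInf_le ?_
  have nbhd_subset : {z | infEDist z {ω | ε + 2 * δ < edist (u ω) (v ω)} < δ}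
      ⊆ {ω | ε < edist (u ω) (v ω)} := by
    intro z hz
    obtain ⟨a, ha, haz⟩ := Metric.infEDist_lt_iff.mp hz
    show ε < edist (u z) (v z)
    by_contra! hzε
    rw [edist_comm] at haz
    exact lt_irrefl (ε + 2 * δ) <| calc
      ε + 2 * δ < edist (u a) (v a) := ha
      _ ≤ edist (u z) (v z) + 2 * edist a z := edist_le_edist_add_two_mul hu hv a z
      _ ≤ ε + 2 * δ := by gcongr
  have hopen : IsOpen {ω | ε + 2 * δ < edist (u ω) (v ω)} :=
    isOpen_lt continuous_const (hu.continuous.edist hv.continuous)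
  calc ρ {ω | ε + 2 * δ < edist (u ω) (v ω)}
      ≤ π {z | infEDist z {ω | ε + 2 * δ < edist (u ω) (v ω)} < δ} + δ :=
        hδ _ hopen.measurableSet
    _ ≤ ε + δ := by gcongr; exact (measure_mono nbhd_subset).trans hε
    _ ≤ ε + 2 * δ := by gcongr; rw [two_mul]; exact le_add_self

lemma GDS.lipschitzWith_one_of_mem_F (X : GDS) {f : X.carrier → ℝ} (hf : f ∈ X.F) :
    LipschitzWith 1 f :=
  LipschitzWith.of_dist_le_mul fun x y => by
    simpa [Real.dist_eq] using (X.dist_isLUB x y).1 ⟨f, hf, rfl⟩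

lemma dConcCoupling_le_add_of_isProhorovBound (X Y : GDS)
    {π ρ : Measure (X.carrier × Y.carrier)} {δ : ℝ≥0∞} (hδ : IsProhorovBound π ρ δ) :
    dConcCoupling X Y ρ ≤ dConcCoupling X Y π + 2 * δ := by
  refine hausd_le_hausd_add ?_
  rintro _ ⟨f, hf, rfl⟩ _ ⟨g, hg, rfl⟩
  exact kyFan_le_kyFan_add_of_isProhorovBound hδ
    (by simpa using (X.lipschitzWith_one_of_mem_F hf).comp LipschitzWith.prod_fst)
    (by simpa using (Y.lipschitzWith_one_of_mem_F hg).comp LipschitzWith.prod_snd)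

/-- `|d_conc^π(X,Y) − d_conc^ρ(X,Y)| ≤ 2 d_P(π, ρ)` for couplings `π, ρ`. -/
theorem dConcCoupling_diff_le_prohorov (X Y : GDS)
    (π ρ : Measure (X.carrier × Y.carrier))
    (hπ : X.Coupling Y π) (hρ : X.Coupling Y ρ) :
    dConcCoupling X Y π ≤ dConcCoupling X Y ρ + 2 * prohorov π ρ ∧
    dConcCoupling X Y ρ ≤ dConcCoupling X Y π + 2 * prohorov π ρ := by
  have : IsProbabilityMeasure π := hπ.1
  have : IsProbabilityMeasure ρ := hρ.1
  have hmass : π Set.univ = ρ Set.univ := by simp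
  rw [prohorov_eq_sInf_isProhorovBound]
  constructor
  · exact le_add_mul_sInf two_ne_zero ENNReal.ofNat_ne_top fun δ hδ =>
      dConcCoupling_le_add_of_isProhorovBound X Y (hδ.symm hmass)
  · exact le_add_mul_sInf two_ne_zero ENNReal.ofNat_ne_top fun δ hδ =>
      dConcCoupling_le_add_of_isProhorovBound X Y hδ
end
end

section
/- Let X and Y be geometric data sets. For any real numbers δ > d_conc(X,Y) and κ ∈ [0, 1 − δ], we have ObsDiam(X; −(κ+δ)) ≤ ObsDiam(Y; −κ) + 2δ. -/
open MeasureTheory Topology Filter ENNReal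

noncomputable section

/-!
If `d_KF(f ∘ φ, g ∘ ψ) < δ`, then off a set of measure `ε < δ` the values `f (φ t)` and
`g (ψ t)` are `ε`-close, so the closed `ε`-thickening of any Borel set carrying mass `1 - κ`
for `g_* μ_Y` carries mass at least `1 - κ - δ` for `f_* μ_X`, and its diameter exceeds that
of the set by at most `2ε`.
-/

open scoped NNReal

theorem GDS.lipschitzWith_of_mem_F_s4 (Z : GDS) {f : Z.carrier → ℝ} (hf : f ∈ Z.F) :
    LipschitzWith 1 f :=
  LipschitzWith.of_dist_le_mul fun x y => by
    simpa [Real.dist_eq] using (Z.dist_isLUB x y).1 ⟨f, hf, rfl⟩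

theorem GDS.measurable_of_mem_F (Z : GDS) {f : Z.carrier → ℝ} (hf : f ∈ Z.F) : Measurable f :=
  (Z.lipschitzWith_of_mem_F_s4 hf).continuous.measurable

theorem IsParam.map_comp {X Y : Type*} [MeasurableSpace X] [MeasurableSpace Y] {μ : Measure X}
    {φ : Set.Icc (0:ℝ) 1 → X} (hφ : IsParam μ φ) {f : X → Y} (hf : Measurable f) :
    volume.map (f ∘ φ) = μ.map f := by
  rw [← hφ.2, Measure.map_map hf hφ.1]

theorem exists_lt_of_hausd_lt {α : Type*} {d : α → α → ℝ≥0∞} {A B : Set α} {δ : ℝ≥0∞}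
    (h : hausd d A B < δ) {a : α} (ha : a ∈ A) : ∃ b ∈ B, d a b < δ := by
  have : ⨅ b : B, d a b < δ :=
    (le_iSup (fun a : A => ⨅ b : B, d a b) ⟨a, ha⟩).trans_lt (max_lt_iff.mp h).1
  obtain ⟨⟨b, hb⟩, hab⟩ := iInf_lt_iff.mp this
  exact ⟨b, hb, hab⟩

theorem partialDiam_mono (ν : Measure ℝ) {a b : ℝ≥0∞} (hab : a ≤ b) :
    partialDiam ν a ≤ partialDiam ν b :=
  iInf₂_mono fun _ _ => iInf_mono' fun hb => ⟨hab.trans hb, le_rfl⟩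

theorem partialDiam_map_le_of_measure_edist_gt_le {Ω : Type*} [MeasurableSpace Ω]
    {π : Measure Ω} {u v : Ω → ℝ} (hu : Measurable u) (hv : Measurable v) {ε : ℝ≥0}
    (hε : π {ω | (ε : ℝ≥0∞) < edist (u ω) (v ω)} ≤ ε) (a : ℝ≥0∞) :
    partialDiam (π.map u) (a - ε) ≤ partialDiam (π.map v) a + 2 * ε := by
  simp only [partialDiam, ENNReal.iInf_add]
  refine le_iInf₂ fun I hI => le_iInf fun ha => ?_
  set J := Metric.cthickening ε I
  have hJ : MeasurableSet J := Metric.isClosed_cthickening.measurableSet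
  have hsub : v ⁻¹' I \ {ω | (ε : ℝ≥0∞) < edist (u ω) (v ω)} ⊆ u ⁻¹' J := by
    rintro ω ⟨hωI : v ω ∈ I, hω⟩
    rw [Set.mem_ofPred_eq, not_lt] at hω
    rw [Set.mem_preimage, Metric.mem_cthickening_iff, ENNReal.ofReal_coe_nnreal]
    exact (Metric.infEDist_le_edist_of_mem hωI).trans hω
  have hmass : a - ε ≤ π.map u J := by
    rw [Measure.map_apply hv hI] at ha
    calc a - ε ≤ π (v ⁻¹' I) - π {ω | (ε : ℝ≥0∞) < edist (u ω) (v ω)} := by gcongr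
      _ ≤ π (v ⁻¹' I \ {ω | (ε : ℝ≥0∞) < edist (u ω) (v ω)}) := le_measure_sdiff
      _ ≤ π (u ⁻¹' J) := measure_mono hsub
      _ = π.map u J := (Measure.map_apply hu hJ).symm
  calc ⨅ (K : Set ℝ) (_ : MeasurableSet K) (_ : a - ε ≤ π.map u K), Metric.ediam K
      ≤ Metric.ediam J := iInf_le_of_le J <| iInf_le_of_le hJ <| iInf_le _ hmass
    _ ≤ Metric.ediam I + 2 * ε := Metric.ediam_cthickening_le ε

theorem partialDiam_map_le_of_kyFan_lt {Ω : Type*} [MeasurableSpace Ω]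
    {π : Measure Ω} {u v : Ω → ℝ} (hu : Measurable u) (hv : Measurable v) {δ : ℝ≥0∞}
    (h : kyFan π u v < δ) (a : ℝ≥0∞) :
    partialDiam (π.map u) (a - δ) ≤ partialDiam (π.map v) a + 2 * δ := by
  obtain ⟨ε, hε, hεδ⟩ := sInf_lt_iff.mp h
  lift ε to ℝ≥0 using ne_top_of_lt hεδ
  calc partialDiam (π.map u) (a - δ)
      ≤ partialDiam (π.map u) (a - ε) := partialDiam_mono _ (tsub_le_tsub_left hεδ.le a)
    _ ≤ partialDiam (π.map v) a + 2 * ε := partialDiam_map_le_of_measure_edist_gt_le hu hv hε a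
    _ ≤ partialDiam (π.map v) a + 2 * δ := by gcongr

theorem obsDiam_le_of_dConc_general (X Y : GDS) (δ κ : ℝ)
    (hδ : dConc X Y < ENNReal.ofReal δ) :
    obsDiam X (κ + δ) ≤ obsDiam Y κ + ENNReal.ofReal (2 * δ) := by
  have hδ0 : 0 ≤ δ := (ENNReal.ofReal_pos.mp (pos_of_gt hδ)).le
  simp only [dConc, iInf_lt_iff] at hδ
  obtain ⟨φ, hφ, ψ, hψ, hH⟩ := hδ
  refine iSup_le fun ⟨f, hf⟩ => ?_
  obtain ⟨_, ⟨g, hg, rfl⟩, hfg⟩ := exists_lt_of_hausd_lt hH ⟨f, hf, rfl⟩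
  have hfm := X.measurable_of_mem_F hf
  have hgm := Y.measurable_of_mem_F hg
  have hpd := partialDiam_map_le_of_kyFan_lt (hfm.comp hφ.1) (hgm.comp hψ.1) hfg
    (ENNReal.ofReal (1 - κ))
  rw [hφ.map_comp hfm, hψ.map_comp hgm, ← ENNReal.ofReal_sub _ hδ0, sub_sub,
    ← ENNReal.ofReal_ofNat 2, ← ENNReal.ofReal_mul zero_le_two] at hpd
  exact hpd.trans <| add_le_add_left
    (le_iSup (fun g : Y.F => partialDiam (Y.μ.map g) (ENNReal.ofReal (1 - κ))) ⟨g, hg⟩) _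

/-- For `δ > d_conc(X,Y)` and `κ ∈ [0, 1 − δ]`,
`ObsDiam(X; −(κ+δ)) ≤ ObsDiam(Y; −κ) + 2δ`. -/
theorem obsDiam_le_of_dConc (X Y : GDS) (δ κ : ℝ)
    (hδ : dConc X Y < ENNReal.ofReal δ) (hκ0 : 0 ≤ κ) (hκ1 : κ ≤ 1 - δ) :
    obsDiam X (κ + δ) ≤ obsDiam Y κ + ENNReal.ofReal (2 * δ) :=
  obsDiam_le_of_dConc_general X Y δ κ hδ
end
end

section
/- Let X be a geometric data set. Then the function κ ↦ ObsDiam(X; −κ) is right-continuous on (0,1). -/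
open MeasureTheory Topology Filter ENNReal

noncomputable section

/-! A bounded set of reals lies in a closed interval of the same diameter, so partial diameters
can be computed with intervals `[c, c + L]`. If intervals of a fixed length `L` carry every mass
`a' < a` of a finite measure, their left endpoints stay in a compact set (a finite measure on `ℝ`
is tight), and a limit point `l` of them gives an interval of any length `L' > L` around
`[l, l + L]` carrying mass `a`. Hence `a ↦ partialDiam ν a` is left-continuous at `a > 0`.
`obsDiam X` is a supremum of such functions of `a = 1 - κ`, so it is antitone and lower
semicontinuous from the right, hence right-continuous. -/

open Set

lemma partialDiam_mono_s5 (ν : Measure ℝ) : Monotone (partialDiam ν) :=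
  fun _ _ h => iInf₂_mono fun _ _ => iInf_mono' fun ha' => ⟨h.trans ha', le_rfl⟩

section PartialDiam

variable {ν : Measure ℝ}

lemma partialDiam_le_of_le_measure_Icc {a : ℝ≥0∞} {c L : ℝ} (h : a ≤ ν (Icc c (c + L))) :
    partialDiam ν a ≤ ENNReal.ofReal L :=
  iInf₂_le_of_le _ measurableSet_Icc <| iInf_le_of_le h <|
    (Real.ediam_Icc c (c + L)).le.trans (by simp)

lemma exists_le_measure_Icc_of_partialDiam_lt {a : ℝ≥0∞} {L : ℝ}
    (h : partialDiam ν a < ENNReal.ofReal L) : ∃ c, a ≤ ν (Icc c (c + L)) := by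
  simp only [partialDiam, iInf_lt_iff, exists_prop] at h
  obtain ⟨I, -, haI, hI⟩ :
      ∃ I : Set ℝ, MeasurableSet I ∧ a ≤ ν I ∧ Metric.ediam I < .ofReal L := h
  have hbdd : Bornology.IsBounded I :=
    Metric.isBounded_iff_ediam_ne_top.2 (hI.trans_le le_top).ne
  rw [Real.ediam_eq hbdd, ENNReal.ofReal_lt_ofReal_iff'] at hI
  refine ⟨sInf I, haI.trans (measure_mono fun x hx => ?_)⟩
  have hx' := hbdd.subset_Icc_sInf_sSup hx
  exact ⟨hx'.1, by linarith [hx'.2, hI.1]⟩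

lemma exists_le_measure_Icc_of_forall_lt [IsFiniteMeasure ν] {a : ℝ≥0∞} (ha : 0 < a)
    {L L' : ℝ} (hL : L < L') (h : ∀ a' < a, ∃ c, a' ≤ ν (Icc c (c + L))) :
    ∃ c, a ≤ ν (Icc c (c + L')) := by
  obtain ⟨u, hu_mono, hu_mem, hu_lim⟩ := exists_seq_strictMono_tendsto' ha
  choose c hc using fun n => h (u n) (hu_mem n).2
  obtain ⟨K, -, hK, hνK⟩ :=
    MeasurableSet.univ.exists_isCompact_sdiff_lt (measure_ne_top ν univ) (hu_mem 0).1.ne'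
  have hmeet : ∀ n, ∃ x ∈ K, x ∈ Icc (c n) (c n + L) := by
    intro n
    by_contra! hdisj
    have hsub : Icc (c n) (c n + L) ⊆ univ \ K :=
      fun x hx => ⟨trivial, fun hxK => hdisj x hxK hx⟩
    exact (((hu_mono.monotone n.zero_le).trans (hc n)).trans (measure_mono hsub)).not_gt hνK
  have hc_mem : ∀ n, c n ∈ Icc (sInf K - L) (sSup K) := by
    intro n
    obtain ⟨x, hxK, hx⟩ := hmeet n
    have hx' := hK.isBounded.subset_Icc_sInf_sSup hxK
    exact ⟨by linarith [hx.2, hx'.1], hx.1.trans hx'.2⟩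
  obtain ⟨l, -, φ, hφ, hlim⟩ := isCompact_Icc.tendsto_subseq hc_mem
  refine ⟨l - (L' - L) / 2, le_of_tendsto (hu_lim.comp hφ.tendsto_atTop) ?_⟩
  filter_upwards [hlim.eventually (Metric.ball_mem_nhds l (half_pos (sub_pos.2 hL)))] with k hk
  rw [Function.comp_apply, Real.dist_eq, abs_lt] at hk
  exact (hc (φ k)).trans (measure_mono (Icc_subset_Icc (by linarith) (by linarith)))

lemma partialDiam_le_of_forall_lt [IsFiniteMeasure ν] {a b : ℝ≥0∞} (ha : 0 < a)
    (h : ∀ a' < a, partialDiam ν a' ≤ b) : partialDiam ν a ≤ b := by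
  refine le_of_forall_gt_imp_ge_of_dense fun b' hbb' => ?_
  rcases eq_or_ne b' ⊤ with rfl | hb'
  · exact le_top
  obtain ⟨m, hbm, hmb'⟩ := exists_between hbb'
  have hm : m ≠ ⊤ := (hmb'.trans_le le_top).ne
  obtain ⟨c, hc⟩ := exists_le_measure_Icc_of_forall_lt ha ((toReal_lt_toReal hm hb').2 hmb')
    fun a' ha' => exists_le_measure_Icc_of_partialDiam_lt <| by
      rw [ofReal_toReal hm]
      exact (h a' ha').trans_lt hbm
  simpa [ofReal_toReal hb'] using partialDiam_le_of_le_measure_Icc hc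

end PartialDiam

lemma obsDiam_antitone (X : GDS) : Antitone (obsDiam X) :=
  fun _ _ hst => iSup_mono fun _ => partialDiam_mono_s5 _ (ofReal_le_ofReal (by linarith))

lemma obsDiam_le_sSup_image_Ioi (X : GDS) {κ : ℝ} (hκ : κ < 1) :
    obsDiam X κ ≤ sSup (obsDiam X '' Ioi κ) := by
  refine iSup_le fun f =>
    partialDiam_le_of_forall_lt (ofReal_pos.2 (sub_pos.2 hκ)) fun a' ha' => ?_
  set t := 1 - a'.toReal
  have ht : t ∈ Ioi κ := by simp only [t, mem_Ioi]; linarith [toReal_lt_of_lt_ofReal ha']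
  have ha't : a' = .ofReal (1 - t) := by
    rw [show 1 - t = a'.toReal by simp [t], ofReal_toReal ha'.ne_top]
  calc partialDiam (X.μ.map f) a' ≤ obsDiam X t :=
        ha't ▸ le_iSup (fun g : X.F => partialDiam (X.μ.map g) (.ofReal (1 - t))) f
    _ ≤ sSup (obsDiam X '' Ioi κ) := le_sSup (mem_image_of_mem _ ht)

/-- `κ ↦ ObsDiam(X; −κ)` is right-continuous on `(0,1)`. -/
theorem obsDiam_rightContinuous (X : GDS) :
    ∀ κ ∈ Set.Ioo (0:ℝ) 1,
      ContinuousWithinAt (fun t => obsDiam X t) (Set.Ici κ) κ := by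
  intro κ hκ
  rw [← continuousWithinAt_Ioi_iff_Ici]
  have hlim := (obsDiam_antitone X).tendsto_nhdsGT κ
  rwa [le_antisymm (sSup_le ?_) (obsDiam_le_sSup_image_Ioi X hκ.2)] at hlim
  rintro _ ⟨t, ht, rfl⟩
  exact obsDiam_antitone X ht.le
end
end

section
/- For any two geometric data sets X and Y, the observable distance is bounded above by the box distance: d_conc(X,Y) ≤ □(X,Y). -/
open MeasureTheory Topology Filter ENNReal

noncomputable section

/-!
A coupling `π` of `μ_X` and `μ_Y` lives on a standard Borel space, so it has a parameter
`Φ : [0,1] → X × Y`, and `pr₁ ∘ Φ`, `pr₂ ∘ Φ` are parameters of `μ_X`, `μ_Y`. Off the set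
`Φ⁻¹ S`, of measure `1 - π S`, the pulled-back features `f ∘ pr₁ ∘ Φ` and `g ∘ pr₂ ∘ Φ` differ by
at most `d∞^S(f ∘ pr₁, g ∘ pr₂)`, so their Ky Fan distance is at most the maximum of the two.
Passing to Hausdorff distances bounds `d_conc` by `max (1 - π S) (H_{d∞^S})`, which is at most
`□_π^S`.
-/

lemma hausd_eq_biSup {α : Type*} (d : α → α → ℝ≥0∞) (A B : Set α) :
    hausd d A B = max (⨆ a ∈ A, ⨅ b ∈ B, d a b) (⨆ b ∈ B, ⨅ a ∈ A, d a b) := by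
  simp only [hausd, iSup_subtype', iInf_subtype']

lemma hausd_image {ι κ α : Type*} (d : α → α → ℝ≥0∞) (A : Set ι) (B : Set κ)
    (u : ι → α) (v : κ → α) :
    hausd d (u '' A) (v '' B) =
      max (⨆ a ∈ A, ⨅ b ∈ B, d (u a) (v b)) (⨆ b ∈ B, ⨅ a ∈ A, d (u a) (v b)) := by
  simp only [hausd_eq_biSup, iSup_image, iInf_image]

lemma hausd_image_le_max {ι κ α β : Type*} {d : α → α → ℝ≥0∞} {d' : β → β → ℝ≥0∞}
    {A : Set ι} {B : Set κ} {u : ι → α} {v : κ → α} {u' : ι → β} {v' : κ → β} {c : ℝ≥0∞}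
    (h : ∀ a ∈ A, ∀ b ∈ B, d (u a) (v b) ≤ max c (d' (u' a) (v' b))) :
    hausd d (u '' A) (v '' B) ≤ max c (hausd d' (u' '' A) (v' '' B)) := by
  rw [hausd_image, hausd_image]
  refine max_le (iSup₂_le fun a ha => ?_) (iSup₂_le fun b hb => ?_)
  · calc ⨅ b ∈ B, d (u a) (v b) ≤ ⨅ b ∈ B, max c (d' (u' a) (v' b)) :=
          iInf₂_mono fun b hb => h a ha b hb
      _ = max c (⨅ b ∈ B, d' (u' a) (v' b)) := (sup_iInf₂_eq c).symm
      _ ≤ _ := max_le_max le_rfl (le_max_of_le_left (le_iSup₂_of_le a ha le_rfl))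
  · calc ⨅ a ∈ A, d (u a) (v b) ≤ ⨅ a ∈ A, max c (d' (u' a) (v' b)) :=
          iInf₂_mono fun a ha => h a ha b hb
      _ = max c (⨅ a ∈ A, d' (u' a) (v' b)) := (sup_iInf₂_eq c).symm
      _ ≤ _ := max_le_max le_rfl (le_max_of_le_right (le_iSup₂_of_le b hb le_rfl))

lemma kyFan_le_max_measure_compl {Ω E : Type*} [MeasurableSpace Ω] [PseudoEMetricSpace E]
    (ν : Measure Ω) (T : Set Ω) (u v : Ω → E) :
    kyFan ν u v ≤ max (ν Tᶜ) (dInfty T u v) := by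
  have hsub : {ω | max (ν Tᶜ) (dInfty T u v) < edist (u ω) (v ω)} ⊆ Tᶜ := by
    intro ω hlt hω
    exact hlt.not_ge ((le_iSup (fun a : T => edist (u a) (v a)) ⟨ω, hω⟩).trans (le_max_right _ _))
  exact sInf_le ((measure_mono hsub).trans (le_max_left _ _))

lemma dInfty_preimage_comp_le {Ω Z E : Type*} [PseudoEMetricSpace E] (Φ : Ω → Z) (S : Set Z)
    (u v : Z → E) : dInfty (Φ ⁻¹' S) (u ∘ Φ) (v ∘ Φ) ≤ dInfty S u v :=
  iSup_le fun ω => le_iSup_of_le (⟨Φ ω, ω.2⟩ : S) le_rfl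

lemma kyFan_comp_le_max {Ω Z E : Type*} [MeasurableSpace Ω] [MeasurableSpace Z]
    [PseudoEMetricSpace E] {ν : Measure Ω} {π : Measure Z} [IsProbabilityMeasure π]
    {Φ : Ω → Z} (hΦ : MeasurePreserving Φ ν π) {S : Set Z} (hS : MeasurableSet S)
    (u v : Z → E) :
    kyFan ν (u ∘ Φ) (v ∘ Φ) ≤ max (1 - π S) (dInfty S u v) := by
  have hcompl : ν (Φ ⁻¹' S)ᶜ = 1 - π S := by
    rw [← Set.preimage_compl, hΦ.measure_preimage hS.compl.nullMeasurableSet,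
      prob_compl_eq_one_sub hS]
  calc kyFan ν (u ∘ Φ) (v ∘ Φ) ≤ max (ν (Φ ⁻¹' S)ᶜ) (dInfty (Φ ⁻¹' S) (u ∘ Φ) (v ∘ Φ)) :=
        kyFan_le_max_measure_compl ν _ _ _
    _ ≤ max (1 - π S) (dInfty S u v) :=
        hcompl ▸ max_le_max le_rfl (dInfty_preimage_comp_le Φ S u v)

lemma IsParam.comp {Z W : Type*} [MeasurableSpace Z] [MeasurableSpace W] {μ : Measure Z}
    {ν : Measure W} {φ : Set.Icc (0:ℝ) 1 → Z} (hφ : IsParam μ φ) {p : Z → W}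
    (hp : Measurable p) (hpμ : μ.map p = ν) : IsParam ν (p ∘ φ) :=
  ⟨hp.comp hφ.1, by rw [← Measure.map_map hp hφ.1, hφ.2, hpμ]⟩

/-- The observable distance is bounded above by the box distance. -/
theorem dConc_le_boxDist (X Y : GDS) : dConc X Y ≤ boxDist X Y := by
  refine le_iInf₂ fun π ⟨hπ, hfst, hsnd⟩ => le_iInf₂ fun S hS => ?_
  have : Nonempty (X.carrier × Y.carrier) := nonempty_of_isProbabilityMeasure π
  obtain ⟨Φ, hΦ, hΦπ⟩ := π.exists_measurable_map_eq
  have hparam : IsParam π Φ := ⟨hΦ, hΦπ⟩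
  calc dConc X Y ≤ hausd (kyFan (volume : Measure (Set.Icc (0:ℝ) 1)))
        ((· ∘ (Prod.fst ∘ Φ)) '' X.F) ((· ∘ (Prod.snd ∘ Φ)) '' Y.F) :=
        iInf₂_le_of_le _ (hparam.comp measurable_fst hfst)
          (iInf₂_le _ (hparam.comp measurable_snd hsnd))
    _ ≤ max (1 - π S) (hausd (dInfty S) ((· ∘ Prod.fst) '' X.F) ((· ∘ Prod.snd) '' Y.F)) :=
        hausd_image_le_max fun f _ g _ =>
          kyFan_comp_le_max ⟨hΦ, hΦπ⟩ hS.measurableSet (f ∘ Prod.fst) (g ∘ Prod.snd)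
    _ ≤ boxS X Y π S X.F Y.F := max_le_max le_rfl (le_mul_of_one_le_left zero_le one_le_two)
end
end

section
/- Let X and Y be geometric data sets and π ∈ Π(μ_X, μ_Y) a coupling. Then dis π ≤ □_π(F_X, F_Y). -/
open MeasureTheory Topology Filter ENNReal

noncomputable section

/-
Fix a closed `S` and `(x₁, y₁), (x₂, y₂) ∈ S`. For `f ∈ F_X` and `g ∈ F_Y` the triangle inequality
gives `|f x₁ - f x₂| ≤ d_Y(y₁, y₂) + 2 d∞^S(f ∘ pr₁, g ∘ pr₂)`. Taking the infimum over `g`, and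
then the supremum over `f` (which is `d_X(x₁, x₂)`), yields
`d_X(x₁, x₂) ≤ d_Y(y₁, y₂) + 2 H_{d∞^S}(F_X ∘ pr₁, F_Y ∘ pr₂)`, and symmetrically. So
`dis S ≤ 2 H_{d∞^S}(F_X ∘ pr₁, F_Y ∘ pr₂)`, and the bound passes to the infima over closed `S`.
-/

lemma dInfty_comm {α β : Type*} [PseudoEMetricSpace β] (A : Set α) (u v : α → β) :
    dInfty A u v = dInfty A v u := by
  simp only [dInfty, edist_comm]

lemma hausd_comm {α : Type*} {d : α → α → ℝ≥0∞} (hd : ∀ a b, d a b = d b a) (A B : Set α) :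
    hausd d A B = hausd d B A := by
  simp only [hausd, hd, max_comm]

lemma iInf_le_hausd {α : Type*} (d : α → α → ℝ≥0∞) {A : Set α} (B : Set α) {a : α}
    (ha : a ∈ A) : ⨅ b : B, d a b ≤ hausd d A B :=
  (le_iSup (fun a : A => ⨅ b : B, d a b) ⟨a, ha⟩).trans (le_max_left _ _)

lemma edist_le_edist_add_two_mul_dInfty {α β : Type*} [PseudoEMetricSpace β] {S : Set α}
    {p q : α} (hp : p ∈ S) (hq : q ∈ S) (u v : α → β) :
    edist (u p) (u q) ≤ edist (v p) (v q) + 2 * dInfty S u v := by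
  have hle : ∀ z ∈ S, edist (u z) (v z) ≤ dInfty S u v := fun z hz =>
    le_iSup (fun a : S => edist (u a) (v a)) ⟨z, hz⟩
  calc edist (u p) (u q) ≤ edist (u p) (v p) + edist (v p) (v q) + edist (v q) (u q) :=
        edist_triangle4 _ _ _ _
    _ ≤ dInfty S u v + edist (v p) (v q) + dInfty S u v := by
        gcongr
        · exact hle p hp
        · rw [edist_comm]; exact hle q hq
    _ = edist (v p) (v q) + 2 * dInfty S u v := by ring

lemma edist_le_iSup_add_two_mul_hausd {α β : Type*} [PseudoEMetricSpace β] {S : Set α}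
    {p q : α} (hp : p ∈ S) (hq : q ∈ S) {A : Set (α → β)} (B : Set (α → β)) {u : α → β}
    (hu : u ∈ A) :
    edist (u p) (u q) ≤ (⨆ v ∈ B, edist (v p) (v q)) + 2 * hausd (dInfty S) A B := by
  calc edist (u p) (u q) ≤ ⨅ v : B, ((⨆ v ∈ B, edist (v p) (v q)) + 2 * dInfty S u v) :=
        le_iInf fun v => (edist_le_edist_add_two_mul_dInfty hp hq u v).trans <|
          add_le_add_left (le_biSup (fun v => edist (v p) (v q)) v.2) _
    _ = (⨆ v ∈ B, edist (v p) (v q)) + 2 * ⨅ v : B, dInfty S u v := by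
        rw [ENNReal.mul_iInf_of_ne two_ne_zero ENNReal.ofNat_ne_top, ENNReal.add_iInf]
    _ ≤ (⨆ v ∈ B, edist (v p) (v q)) + 2 * hausd (dInfty S) A B := by
        gcongr; exact iInf_le_hausd _ B hu

lemma edist_dist_le_of_le_add {X Y : Type*} [PseudoMetricSpace X] [PseudoMetricSpace Y]
    {x₁ x₂ : X} {y₁ y₂ : Y} {c : ℝ≥0∞} (hxy : edist x₁ x₂ ≤ edist y₁ y₂ + c)
    (hyx : edist y₁ y₂ ≤ edist x₁ x₂ + c) : edist (dist x₁ x₂) (dist y₁ y₂) ≤ c := by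
  rcases eq_or_ne c ⊤ with rfl | hc
  · exact le_top
  rw [← ENNReal.ofReal_toReal hc] at hxy hyx ⊢
  rw [edist_dist, edist_dist, ← ENNReal.ofReal_add dist_nonneg ENNReal.toReal_nonneg,
    ENNReal.ofReal_le_ofReal_iff (by positivity)] at hxy hyx
  rw [edist_dist, Real.dist_eq]
  exact ENNReal.ofReal_le_ofReal (abs_sub_le_iff.2 ⟨by linarith, by linarith⟩)

namespace GDS

lemma edist_eq_iSup (X : GDS) (x y : X.carrier) :
    edist x y = ⨆ f ∈ X.F, edist (f x) (f y) := by
  have hlub := Continuous.leftOrdContinuous ENNReal.continuous_ofReal ENNReal.ofReal_mono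
    (X.F_nonempty.image _) (X.dist_isLUB x y)
  rw [edist_dist, ← hlub.sSup_eq, Set.image_image, sSup_image]
  simp only [edist_dist, Real.dist_eq]

end GDS

lemma distortion_le_two_mul_hausd (X Y : GDS) (S : Set (X.carrier × Y.carrier)) :
    distortion S ≤
      2 * hausd (dInfty S) ((· ∘ Prod.fst) '' X.F) ((· ∘ Prod.snd) '' Y.F) := by
  refine iSup₂_le fun ⟨p, hp⟩ ⟨q, hq⟩ => edist_dist_le_of_le_add ?_ ?_
  · rw [X.edist_eq_iSup, Y.edist_eq_iSup]
    refine iSup₂_le fun f hf => ?_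
    have := edist_le_iSup_add_two_mul_hausd hp hq ((· ∘ Prod.snd) '' Y.F)
      (Set.mem_image_of_mem (· ∘ Prod.fst) hf)
    simpa only [iSup_image, Function.comp_apply] using this
  · rw [X.edist_eq_iSup, Y.edist_eq_iSup, hausd_comm (dInfty_comm S)]
    refine iSup₂_le fun g hg => ?_
    have := edist_le_iSup_add_two_mul_hausd hp hq ((· ∘ Prod.fst) '' X.F)
      (Set.mem_image_of_mem (· ∘ Prod.snd) hg)
    simpa only [iSup_image, Function.comp_apply] using this

theorem disCoupling_le_boxCoupling_general (X Y : GDS)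
    (π : Measure (X.carrier × Y.carrier)) :
    disCoupling X Y π ≤ boxCoupling X Y π X.F Y.F :=
  iInf₂_mono fun S _ => max_le_max le_rfl (distortion_le_two_mul_hausd X Y S)

/-- For a coupling `π` of two geometric data sets,
`dis π ≤ □_π(F_X, F_Y)`. -/
theorem disCoupling_le_boxCoupling (X Y : GDS)
    (π : Measure (X.carrier × Y.carrier)) (hπ : X.Coupling Y π) :
    disCoupling X Y π ≤ boxCoupling X Y π X.F Y.F :=
  disCoupling_le_boxCoupling_general X Y π
end
end
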